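/- arXiv:2511.01432 — 3 statements merged into one kernel-verified Lean document; each statement's English description precedes it below -/
import Mathlib

section
/- Let w ∈ ℝ³ be a constant vector and define u : ℝ³ → ℝ³ by u(x) = 3(1+|x|²)^{-2}((1-|x|²)w + 2(w·x)x + 2 w×x). Then ∇×u(x) = 4(1+|x|²)^{-1} u(x) for all x ∈ ℝ³. -/
/-!
Write `u = φ P` with `φ(x) = 3(1+|x|²)⁻²` and `P(x) = (1-|x|²)w + 2(w·x)x + 2 w×x`. Then
`∇×u = ∇φ × P + φ ∇×P`, where `∇φ = -12(1+|x|²)⁻³ x` and `∇×P = 4w + 4 w×x`. Expanding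
`x × P` with `x × (w × x) = |x|² w - (w·x) x`, the two terms add up to `4(1+|x|²)⁻¹ φ P`.
-/
noncomputable section
open MeasureTheory Real
open scoped BigOperators

/-- `ℝ³` with the Euclidean norm. -/
abbrev E3 : Type := EuclideanSpace ℝ (Fin 3)

/-- Build a vector of `E3` from components. -/
def toE3 (f : Fin 3 → ℝ) : E3 := (WithLp.equiv 2 (Fin 3 → ℝ)).symm f

/-- Euclidean inner product on `ℝ³`. -/
def ip (a b : E3) : ℝ := @inner ℝ _ _ a b

/-- `i`-th partial derivative of a scalar function on `ℝ³`. -/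
def pd (i : Fin 3) (f : E3 → ℝ) (x : E3) : ℝ :=
  fderiv ℝ f x (EuclideanSpace.single i 1)

/-- The curl `∇×v` of a vector field on `ℝ³`. -/
def curl (v : E3 → E3) (x : E3) : E3 :=
  toE3 ![pd 1 (fun y => v y 2) x - pd 2 (fun y => v y 1) x,
        pd 2 (fun y => v y 0) x - pd 0 (fun y => v y 2) x,
        pd 0 (fun y => v y 1) x - pd 1 (fun y => v y 0) x]

/-- The divergence of a vector field on `ℝ³`. -/
def div3 (v : E3 → E3) (x : E3) : ℝ :=
  pd 0 (fun y => v y 0) x + pd 1 (fun y => v y 1) x + pd 2 (fun y => v y 2) x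

/-- The cross product on `ℝ³`. -/
def cross3 (a b : E3) : E3 :=
  toE3 (crossProduct (WithLp.equiv 2 (Fin 3 → ℝ) a) (WithLp.equiv 2 (Fin 3 → ℝ) b))

/-- Squared Frobenius norm `|∇v|²` of the Jacobian of a vector field. -/
def jacNormSq (v : E3 → E3) (x : E3) : ℝ :=
  ∑ i : Fin 3, ∑ j : Fin 3, (pd i (fun y => v y j) x) ^ 2

/-- The Loss–Yau field `u(x) = 3(1+|x|²)⁻²((1-|x|²)w + 2(w·x)x + 2 w×x)`. -/
def uLY (w : E3) (x : E3) : E3 :=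
  (3 * ((1 + ‖x‖ ^ 2) ^ 2)⁻¹) •
    ((1 - ‖x‖ ^ 2) • w + (2 * ip w x) • x + (2 : ℝ) • cross3 w x)

lemma norm_sq_eq_coords (x : E3) : ‖x‖ ^ 2 = x 0 ^ 2 + x 1 ^ 2 + x 2 ^ 2 := by
  simp [EuclideanSpace.norm_sq_eq, Fin.sum_univ_three]

lemma ip_eq_coords (a b : E3) : ip a b = a 0 * b 0 + a 1 * b 1 + a 2 * b 2 := by
  simp [ip, PiLp.inner_apply, Fin.sum_univ_three, mul_comm]

lemma cross3_apply (a b : E3) (j : Fin 3) :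
    cross3 a b j = a (j + 1) * b (j + 2) - a (j + 2) * b (j + 1) := by
  fin_cases j <;> simp [cross3, toE3, crossProduct]

def cross3CLM (w : E3) : E3 →L[ℝ] E3 :=
  LinearMap.toContinuousLinearMap
    ((WithLp.linearEquiv 2 ℝ (Fin 3 → ℝ)).symm.toLinearMap ∘ₗ crossProduct (WithLp.equiv 2 _ w) ∘ₗ
      (WithLp.linearEquiv 2 ℝ (Fin 3 → ℝ)).toLinearMap)

lemma cross3CLM_apply (w y : E3) : cross3CLM w y = cross3 w y := rfl

lemma pd_eq_of_hasFDerivAt {v : E3 → E3} {D : E3 →L[ℝ] E3} {x : E3} (hv : HasFDerivAt v D x)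
    (i j : Fin 3) : pd i (fun y => v y j) x = D (EuclideanSpace.single i 1) j := by
  have hvj : (fun y => v y j) = EuclideanSpace.proj j ∘ v := rfl
  rw [pd, hvj, ((EuclideanSpace.proj j).hasFDerivAt.comp x hv).fderiv]
  rfl

lemma curl_eq_of_hasFDerivAt {v : E3 → E3} {D : E3 →L[ℝ] E3} {x : E3} (hv : HasFDerivAt v D x) :
    curl v x = toE3 ![D (EuclideanSpace.single 1 1) 2 - D (EuclideanSpace.single 2 1) 1,
      D (EuclideanSpace.single 2 1) 0 - D (EuclideanSpace.single 0 1) 2,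
      D (EuclideanSpace.single 0 1) 1 - D (EuclideanSpace.single 1 1) 0] := by
  simp only [curl, pd_eq_of_hasFDerivAt hv]

lemma hasFDerivAt_uLY (w x : E3) :
    HasFDerivAt (uLY w)
      ((3 * ((1 + ‖x‖ ^ 2) ^ 2)⁻¹) •
          ((-2 : ℝ) • (innerSL ℝ x).smulRight w + (2 : ℝ) • (innerSL ℝ w).smulRight x +
            (2 * ip w x) • ContinuousLinearMap.id ℝ E3 + (2 : ℝ) • cross3CLM w) -
        (12 * ((1 + ‖x‖ ^ 2) ^ 3)⁻¹) • (innerSL ℝ x).smulRight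
          ((1 - ‖x‖ ^ 2) • w + (2 * ip w x) • x + (2 : ℝ) • cross3 w x)) x := by
  have hρ : 1 + ‖x‖ ^ 2 ≠ 0 := by positivity
  have hnorm := (hasStrictFDerivAt_norm_sq x).hasFDerivAt
  have hφ : HasDerivAt (fun s : ℝ => 3 * ((1 + s) ^ 2)⁻¹)
      (-(6 * ((1 + ‖x‖ ^ 2) ^ 3)⁻¹)) (‖x‖ ^ 2) := by
    refine ((((hasDerivAt_id _).const_add 1).pow 2).inv (pow_ne_zero 2 hρ)).const_mul 3
      |>.congr_deriv ?_
    simp only [Pi.pow_apply]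
    field_simp
    ring
  have hP := ((hnorm.const_sub 1).smul_const w).add
    ((((innerSL ℝ w).hasFDerivAt (x := x)).const_mul 2).smul (hasFDerivAt_id x)) |>.add
    ((cross3CLM w).hasFDerivAt.const_smul (2 : ℝ))
  refine ((hφ.comp_hasFDerivAt x hnorm).smul hP).congr_fderiv ?_
  ext h : 1
  simp only [ip, cross3CLM_apply, Function.comp_apply, coe_innerSL_apply, id_eq, Pi.add_apply,
    Pi.smul_apply', Pi.smul_apply, add_apply, smul_apply, sub_apply, neg_apply,
    ContinuousLinearMap.smulRight_apply, ContinuousLinearMap.id_apply, nsmul_eq_mul, Nat.cast_ofNat,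
    smul_eq_mul]
  module

/-- `∇×u(x) = 4(1+|x|²)⁻¹ u(x)` for the Loss–Yau field. -/
theorem curl_uLY (w : E3) (x : E3) :
    curl (uLY w) x = (4 * (1 + ‖x‖ ^ 2)⁻¹) • uLY w x := by
  rw [curl_eq_of_hasFDerivAt (hasFDerivAt_uLY w x)]
  have hρ : 1 + (x 0 ^ 2 + x 1 ^ 2 + x 2 ^ 2) ≠ 0 := by positivity
  ext k
  fin_cases k <;>
  · simp only [uLY, toE3, WithLp.equiv_symm_apply, Fin.zero_eta, Fin.mk_one, Fin.reduceFinMk,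
      Matrix.cons_val_zero, Matrix.cons_val_one, Matrix.cons_val_two, Matrix.tail_cons,
      Matrix.head_cons, norm_sq_eq_coords, ip_eq_coords, cross3_apply, cross3CLM_apply,
      coe_innerSL_apply, EuclideanSpace.inner_single_right, conj_trivial, sub_apply, add_apply,
      smul_apply, ContinuousLinearMap.smulRight_apply, ContinuousLinearMap.id_apply,
      PiLp.sub_apply, PiLp.add_apply, PiLp.smul_apply, PiLp.single_apply, smul_eq_mul,
      Fin.reduceAdd, Fin.reduceEq, reduceIte]
    field_simp
    ring
end
end

section
/- Let w ∈ ℝ³ be a constant vector and define u : ℝ³ → ℝ³ by u(x) = 3(1+|x|²)^{-2}((1-|x|²)w + 2(w·x)x + 2 w×x). Then |u(x)| = 3(1+|x|²)^{-1}|w| for all x ∈ ℝ³. -/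
/-!
Viewing vectors of `ℝ³` as pure quaternions, `(1 - x) w (1 + x) = (1-|x|²)w + 2(w·x)x + 2 w×x`,
so the bracket in `u(x)` has norm `|1 - x|² |w| = (1+|x|²)|w|`. Without quaternions: `w×x` is
orthogonal to `w` and `x` and `|w×x|² = |w|²|x|² - (w·x)²` (Lagrange), and these three facts alone
make the square of the norm expand to `(1+|x|²)²|w|²`.
-/
noncomputable section
open MeasureTheory Real
open scoped BigOperators

open scoped RealInnerProductSpace

theorem norm_one_sub_sq_smul_add_two_inner_smul_add_two_smul {F : Type*}
    [NormedAddCommGroup F] [InnerProductSpace ℝ F] {w x c : F} (hwc : ⟪w, c⟫ = 0) (hxc : ⟪x, c⟫ = 0)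
    (hc : ‖c‖ ^ 2 = ‖w‖ ^ 2 * ‖x‖ ^ 2 - ⟪w, x⟫ ^ 2) :
    ‖(1 - ‖x‖ ^ 2) • w + (2 * ⟪w, x⟫) • x + (2 : ℝ) • c‖ = (1 + ‖x‖ ^ 2) * ‖w‖ := by
  refine (sq_eq_sq₀ (norm_nonneg _) (by positivity)).1 ?_
  rw [← real_inner_self_eq_norm_sq]
  simp only [inner_add_left, inner_add_right, real_inner_smul_left, real_inner_smul_right,
    real_inner_comm w c, real_inner_comm x c, real_inner_comm w x, hwc, hxc]
  simp only [real_inner_self_eq_norm_sq]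
  linear_combination 4 * hc

theorem inner_cross3_cross3 (a b c d : E3) :
    ⟪cross3 a b, cross3 c d⟫ = ⟪a, c⟫ * ⟪b, d⟫ - ⟪a, d⟫ * ⟪b, c⟫ := by
  simp only [cross3, toE3, WithLp.equiv_apply, WithLp.equiv_symm_apply,
    EuclideanSpace.inner_eq_star_dotProduct, star_trivial, cross_dot_cross]
  ring

theorem inner_cross3_self_left (a b : E3) : ⟪a, cross3 a b⟫ = 0 := by
  simp [cross3, toE3, EuclideanSpace.inner_eq_star_dotProduct, dotProduct_comm _ a.ofLp]

theorem inner_cross3_self_right (a b : E3) : ⟪b, cross3 a b⟫ = 0 := by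
  simp [cross3, toE3, EuclideanSpace.inner_eq_star_dotProduct, dotProduct_comm _ b.ofLp]

theorem norm_cross3_sq (a b : E3) : ‖cross3 a b‖ ^ 2 = ‖a‖ ^ 2 * ‖b‖ ^ 2 - ⟪a, b⟫ ^ 2 := by
  rw [← real_inner_self_eq_norm_sq, inner_cross3_cross3, real_inner_self_eq_norm_sq,
    real_inner_self_eq_norm_sq, real_inner_comm b a]
  ring

/-- `|u(x)| = 3(1+|x|²)⁻¹ |w|` for the Loss–Yau field. -/
theorem norm_uLY (w : E3) (x : E3) :
    ‖uLY w x‖ = 3 * (1 + ‖x‖ ^ 2)⁻¹ * ‖w‖ := by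
  have hpos : (0 : ℝ) < 1 + ‖x‖ ^ 2 := by positivity
  rw [uLY, norm_smul, ip,
    norm_one_sub_sq_smul_add_two_inner_smul_add_two_smul (inner_cross3_self_left w x)
      (inner_cross3_self_right w x) (norm_cross3_sq w x),
    Real.norm_of_nonneg (by positivity)]
  field_simp
end
end

section
/- Let v : ℝ³ → ℝ³ be differentiable with v(x) ≠ 0 for all x, and write v = |v| e₀ where e₀ = v/|v|. If |∇|v|(x)| = |∇v(x)| for all x (Frobenius norm on the right), then ∇e₀ = 0 everywhere; hence if ℝ³ is connected and e₀ is C¹, e₀ is a constant unit vector and v = |v| e₀ for a fixed e₀ ∈ S². -/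
noncomputable section
open MeasureTheory Real
open scoped BigOperators

/-! At a point `x` write `a = v x` and `bᵢ = ∂ᵢv(x)`. Then `∂ᵢ‖v‖ = ⟪a, bᵢ⟫ / ‖a‖` and, by
Pythagoras, `‖bᵢ‖² = (⟪a, bᵢ⟫ / ‖a‖)² + ‖bᵢ - (⟪a, bᵢ⟫ / ‖a‖²) a‖²`, so the hypothesis
`|∇‖v‖|² = |∇v|²` forces the component of every `bᵢ` orthogonal to `a` to vanish. That component
is `‖a‖ ∂ᵢ(v / ‖v‖)`, so the direction field `v / ‖v‖` has zero derivative and is constant. -/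

open scoped RealInnerProductSpace

section InnerProductSpace

variable {E F : Type*} [NormedAddCommGroup E] [NormedSpace ℝ E]
  [NormedAddCommGroup F] [InnerProductSpace ℝ F] {f : E → F} {D : E →L[ℝ] F} {x : E}

theorem HasFDerivAt.norm (hf : HasFDerivAt f D x) (h0 : f x ≠ 0) :
    HasFDerivAt (fun y => ‖f y‖) (‖f x‖⁻¹ • (innerSL ℝ (f x)).comp D) x := by
  have hsqrt := (hasStrictFDerivAt_norm_sq (f x)).hasFDerivAt.comp x hf
    |>.sqrt (by simpa using h0)
  simp only [Function.comp_def, Real.sqrt_sq (norm_nonneg _)] at hsqrt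
  convert hsqrt using 1
  ext w
  simp only [FunLike.coe_smul, Pi.smul_apply, ContinuousLinearMap.comp_apply, smul_eq_mul]
  field_simp
  rw [nsmul_eq_mul]
  ring

theorem fderiv_norm_apply (hf : DifferentiableAt ℝ f x) (h0 : f x ≠ 0) (w : E) :
    fderiv ℝ (fun y => ‖f y‖) x w = ⟪f x, fderiv ℝ f x w⟫ / ‖f x‖ := by
  rw [(hf.hasFDerivAt.norm h0).fderiv]
  simp [div_eq_inv_mul]

theorem fderiv_inv_norm_smul_apply (hf : DifferentiableAt ℝ f x) (h0 : f x ≠ 0) (w : E) :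
    fderiv ℝ (fun y => ‖f y‖⁻¹ • f y) x w =
      ‖f x‖⁻¹ • (fderiv ℝ f x w - (⟪f x, fderiv ℝ f x w⟫ / ‖f x‖ ^ 2) • f x) := by
  have hn : ‖f x‖ ≠ 0 := norm_ne_zero_iff.2 h0
  have hinv : HasFDerivAt (fun y => ‖f y‖⁻¹) _ x :=
    (hasDerivAt_inv hn).comp_hasFDerivAt x (hf.hasFDerivAt.norm h0)
  have hg : HasFDerivAt (fun y => ‖f y‖⁻¹ • f y) _ x := hinv.smul hf.hasFDerivAt
  rw [hg.fderiv]
  simp only [neg_smul, add_apply, smul_apply, ContinuousLinearMap.smulRight_apply, neg_apply,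
    ContinuousLinearMap.comp_apply, coe_innerSL_apply, smul_eq_mul]
  module

theorem norm_sub_inner_div_smul_sq {a : F} (ha : a ≠ 0) (b : F) :
    ‖b - (⟪a, b⟫ / ‖a‖ ^ 2) • a‖ ^ 2 = ‖b‖ ^ 2 - (⟪a, b⟫ / ‖a‖) ^ 2 := by
  have hn : ‖a‖ ≠ 0 := norm_ne_zero_iff.2 ha
  rw [norm_sub_sq_real, norm_smul, real_inner_smul_right, real_inner_comm, Real.norm_eq_abs,
    mul_pow, sq_abs]
  field_simp
  ring

end InnerProductSpace

theorem pd_eq_fderiv_apply {v : E3 → E3} {x : E3} (hv : DifferentiableAt ℝ v x) (i j : Fin 3) :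
    pd i (fun y => v y j) x = fderiv ℝ v x (EuclideanSpace.single i 1) j := by
  have h : HasFDerivAt (fun y => v y j) ((EuclideanSpace.proj j).comp (fderiv ℝ v x)) x :=
    (EuclideanSpace.proj (𝕜 := ℝ) j).hasFDerivAt.comp x hv.hasFDerivAt
  rw [pd, h.fderiv]
  rfl

theorem jacNormSq_eq_sum_norm_sq {v : E3 → E3} {x : E3} (hv : DifferentiableAt ℝ v x) :
    jacNormSq v x = ∑ i : Fin 3, ‖fderiv ℝ v x (EuclideanSpace.single i 1)‖ ^ 2 := by
  simp only [jacNormSq, pd_eq_fderiv_apply hv, EuclideanSpace.norm_sq_eq, Real.norm_eq_abs, sq_abs]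

theorem ContinuousLinearMap.eq_zero_of_apply_single {ι F : Type*} [Fintype ι] [DecidableEq ι]
    [NormedAddCommGroup F] [NormedSpace ℝ F] {L : EuclideanSpace ℝ ι →L[ℝ] F}
    (h : ∀ i, L (EuclideanSpace.single i 1) = 0) : L = 0 := by
  apply ContinuousLinearMap.coe_injective
  refine (EuclideanSpace.basisFun ι ℝ).toBasis.ext fun i => ?_
  simpa using h i

theorem fderiv_inv_norm_smul_eq_zero {v : E3 → E3} {x : E3} (hv : DifferentiableAt ℝ v x)
    (hne : v x ≠ 0) (heq : ∑ i : Fin 3, (pd i (fun y => ‖v y‖) x) ^ 2 = jacNormSq v x) :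
    fderiv ℝ (fun y => ‖v y‖⁻¹ • v y) x = 0 := by
  set b : Fin 3 → E3 := fun i => fderiv ℝ v x (EuclideanSpace.single i 1)
  have hperp : ∑ i, ‖b i - (⟪v x, b i⟫ / ‖v x‖ ^ 2) • v x‖ ^ 2 = 0 := by
    simp only [norm_sub_inner_div_smul_sq hne, Finset.sum_sub_distrib,
      ← jacNormSq_eq_sum_norm_sq hv, ← heq, pd, fderiv_norm_apply hv hne, b, sub_self]
  rw [Finset.sum_eq_zero_iff_of_nonneg fun i _ => sq_nonneg _] at hperp
  refine ContinuousLinearMap.eq_zero_of_apply_single fun i => ?_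
  have hzero : b i - (⟪v x, b i⟫ / ‖v x‖ ^ 2) • v x = 0 := by
    simpa using hperp i (Finset.mem_univ i)
  rw [fderiv_inv_norm_smul_apply hv hne]
  exact (congrArg _ hzero).trans (smul_zero _)

theorem exists_norm_eq_one_forall_eq_norm_smul {E F : Type*} [NormedAddCommGroup E]
    [NormedSpace ℝ E] [NormedAddCommGroup F] [InnerProductSpace ℝ F] {v : E → F} (hv : Differentiable ℝ v)
    (hne : ∀ x, v x ≠ 0) (hd : ∀ x, fderiv ℝ (fun y => ‖v y‖⁻¹ • v y) x = 0) :
    ∃ c : F, ‖c‖ = 1 ∧ ∀ x, v x = ‖v x‖ • c := by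
  have hg : Differentiable ℝ (fun y => ‖v y‖⁻¹ • v y) := fun x =>
    (((hv x).norm ℝ (hne x)).inv (norm_ne_zero_iff.2 (hne x))).smul (hv x)
  refine ⟨‖v 0‖⁻¹ • v 0, ?_, fun x => ?_⟩
  · rw [norm_smul, norm_inv, norm_norm, inv_mul_cancel₀ (norm_ne_zero_iff.2 (hne 0))]
  · rw [← is_const_of_fderiv_eq_zero hg hd x 0, smul_smul,
      mul_inv_cancel₀ (norm_ne_zero_iff.2 (hne x)), one_smul]

/-- If `v` is a nowhere-vanishing `C¹` field with `|∇|v|| = |∇v|` everywhere (Frobenius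
norm), then `e₀ = v/|v|` has vanishing derivative and is a constant unit vector, so
`v = |v| e₀` for a fixed `e₀ ∈ S²`. -/
theorem direction_constant (v : E3 → E3) (hv : ContDiff ℝ 1 v) (hne : ∀ x, v x ≠ 0)
    (heq : ∀ x, ∑ i : Fin 3, (pd i (fun y => ‖v y‖) x) ^ 2 = jacNormSq v x) :
    (∀ x, fderiv ℝ (fun y => ‖v y‖⁻¹ • v y) x = 0) ∧
      ∃ c : E3, ‖c‖ = 1 ∧ ∀ x, v x = ‖v x‖ • c := by
  have hvd : Differentiable ℝ v := hv.differentiable one_ne_zero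
  have hd x := fderiv_inv_norm_smul_eq_zero (hvd x) (hne x) (heq x)
  exact ⟨hd, exists_norm_eq_one_forall_eq_norm_smul hvd hne hd⟩
end
end
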